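/- Every finite MV-algebra is isomorphic to a finite product Łₙ₁ × ⋯ × Łₙₜ of finite MV-chains, and this representation is unique up to reordering of the factors. -/

import Mathlib

/-!
An idempotent `e` (`e ⊕ e = e`) splits `A` as the product of the MV-algebras `[0, e]` and
`[0, ¬e]`, both smaller than `A` when `e ≠ 0, 1`. By induction on `|A|` it remains to treat an
algebra whose only idempotents are `0 ≠ 1`. There the least nonzero element `c` lies below
every nonzero element, so `A = {0, c, 2c, …, nc = 1} ≅ Łₙ`.

For uniqueness, the atoms of the Boolean algebra of idempotents of `Łₙ₁ × ⋯ × Łₙₜ` are the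
unit vectors, and the interval below the `i`-th one has `nᵢ + 1` elements.
-/

structure MVAlgebra (A : Type*) where
  add : A → A → A
  neg : A → A
  zero : A
  add_assoc : ∀ x y z : A, add x (add y z) = add (add x y) z
  add_comm : ∀ x y : A, add x y = add y x
  add_zero : ∀ x : A, add x zero = x
  neg_neg : ∀ x : A, neg (neg x) = x
  add_neg_zero : ∀ x : A, add x (neg zero) = neg zero
  luk : ∀ x y : A, add (neg (add (neg x) y)) y = add (neg (add (neg y) x)) x

namespace MVAlgebra

variable {A : Type*}

/-- The top element `1 = ¬0`. -/
def one (M : MVAlgebra A) : A := M.neg M.zero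

/-- The Łukasiewicz product `x ⊙ y = ¬(¬x ⊕ ¬y)`. -/
def mul (M : MVAlgebra A) (x y : A) : A := M.neg (M.add (M.neg x) (M.neg y))

/-- Truncated difference `x ⊖ y = x ⊙ ¬y`. -/
def sub (M : MVAlgebra A) (x y : A) : A := M.mul x (M.neg y)

/-- The natural order: `x ≤ y` iff `¬x ⊕ y = 1`. -/
def le (M : MVAlgebra A) (x y : A) : Prop := M.add (M.neg x) y = M.one

/-- Lattice join `x ∨ y = (x ⊖ y) ⊕ y`. -/
def sup (M : MVAlgebra A) (x y : A) : A := M.add (M.sub x y) y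

/-- Lattice meet `x ∧ y = ¬(¬x ∨ ¬y)`. -/
def inf (M : MVAlgebra A) (x y : A) : A := M.neg (M.sup (M.neg x) (M.neg y))

end MVAlgebra

namespace MVAlgebra

/-- `A` is represented as the product `Ł_{ns 0} × ⋯ × Ł_{ns (t-1)}` of finite
Łukasiewicz chains: there is a map `f : A → (Fin t → ℝ)` which is an injective
homomorphism for the pointwise MV-operations of `[0,1]`, and whose range is exactly
the set of tuples whose `i`-th component lies in `Ł_{ns i} = {k / ns i : k ≤ ns i}`. -/
def IsChainProdRepr {A : Type*} (M : MVAlgebra A) (t : ℕ) (ns : Fin t → ℕ) : Prop :=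
  (∀ i, 1 ≤ ns i) ∧
  ∃ f : A → Fin t → ℝ,
    Function.Injective f ∧
    (∀ a b : A, f (M.add a b) = fun i => min (f a i + f b i) 1) ∧
    (∀ a : A, f (M.neg a) = fun i => 1 - f a i) ∧
    (f M.zero = fun _ => 0) ∧
    (∀ g : Fin t → ℝ,
      (∀ i, ∃ k : ℕ, k ≤ ns i ∧ g i = (k : ℝ) / ns i) ↔ ∃ a : A, f a = g)

end MVAlgebra

theorem Fin.append_eq_iff {m n : ℕ} {α : Sort*} {u : Fin m → α} {v : Fin n → α}
    {g : Fin (m + n) → α} :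
    Fin.append u v = g ↔ u = (fun i => g (Fin.castAdd n i)) ∧ v = fun j => g (Fin.natAdd m j) :=
  ⟨by rintro rfl; simp, by
    rintro ⟨rfl, rfl⟩; exact Fin.append_castAdd_natAdd⟩

theorem Pi.eq_single_of_nonneg_of_le_single {ι α : Type*} [DecidableEq ι] [PartialOrder α]
    [Zero α] {v : ι → α} {i : ι} {a : α} (h₀ : 0 ≤ v) (h : v ≤ Pi.single i a) :
    v = Pi.single i (v i) := by
  funext j
  by_cases hj : j = i
  · subst hj
    rw [Pi.single_eq_same]
  · have hvj := h j
    rw [Pi.single_eq_of_ne hj] at hvj ⊢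
    exact le_antisymm hvj (h₀ j)

namespace MVAlgebra

variable {A B : Type*} {M : MVAlgebra A} {e : A}

section

variable (M)

theorem zero_add (x : A) : M.add M.zero x = x := by rw [M.add_comm]; exact M.add_zero x

theorem add_one (x : A) : M.add x M.one = M.one := M.add_neg_zero x

theorem one_add (x : A) : M.add M.one x = M.one := by rw [M.add_comm]; exact M.add_one x

theorem neg_one : M.neg M.one = M.zero := M.neg_neg M.zero

theorem neg_add_self (x : A) : M.add (M.neg x) x = M.one := by
  have h := M.luk x M.one
  rw [M.add_one, M.neg_one, M.zero_add] at h
  exact h.symm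

theorem add_neg_self (x : A) : M.add x (M.neg x) = M.one := by
  rw [M.add_comm]; exact M.neg_add_self x

theorem mul_comm (x y : A) : M.mul x y = M.mul y x := by unfold mul; rw [M.add_comm]

theorem mul_assoc (x y z : A) : M.mul x (M.mul y z) = M.mul (M.mul x y) z := by
  unfold mul; rw [M.neg_neg, M.neg_neg, M.add_assoc]

theorem one_mul (x : A) : M.mul M.one x = x := by
  unfold mul; rw [M.neg_one, M.zero_add, M.neg_neg]

theorem zero_mul (x : A) : M.mul M.zero x = M.zero := by
  unfold mul; rw [← one, M.one_add, M.neg_one]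

theorem neg_mul_self (x : A) : M.mul (M.neg x) x = M.zero := by
  unfold mul; rw [M.neg_neg, M.add_neg_self, M.neg_one]

theorem mul_neg_self (x : A) : M.mul x (M.neg x) = M.zero := by
  rw [M.mul_comm]; exact M.neg_mul_self x

theorem neg_mul (x y : A) : M.neg (M.mul x y) = M.add (M.neg x) (M.neg y) := by
  unfold mul; rw [M.neg_neg]

theorem neg_add (x y : A) : M.neg (M.add x y) = M.mul (M.neg x) (M.neg y) := by
  unfold mul; rw [M.neg_neg, M.neg_neg]

theorem sub_eq (x y : A) : M.sub x y = M.neg (M.add (M.neg x) y) := by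
  unfold sub mul; rw [M.neg_neg]

theorem sup_comm (x y : A) : M.sup x y = M.sup y x := by
  unfold sup; rw [M.sub_eq, M.sub_eq]; exact M.luk x y

theorem inf_comm (x y : A) : M.inf x y = M.inf y x := by unfold inf; rw [M.sup_comm]

theorem inf_eq_mul (x y : A) : M.inf x y = M.mul (M.add x (M.neg y)) y := by
  unfold inf sup; rw [M.sub_eq, M.neg_neg]; rfl

theorem neg_inf (x y : A) : M.neg (M.inf x y) = M.sup (M.neg x) (M.neg y) := by
  unfold inf; rw [M.neg_neg]

theorem mul_add_neg (x y : A) : M.mul (M.add x y) (M.neg y) = M.inf x (M.neg y) := by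
  rw [M.inf_eq_mul, M.neg_neg]

theorem le_refl (x : A) : M.le x x := M.neg_add_self x

theorem zero_le (x : A) : M.le M.zero x := M.one_add x

theorem le_one (x : A) : M.le x M.one := M.add_one (M.neg x)

theorem le_add_right (x z : A) : M.le x (M.add x z) := by
  unfold le; rw [M.add_assoc, M.neg_add_self, M.one_add]

theorem le_add_left (x z : A) : M.le x (M.add z x) := by
  rw [M.add_comm]; exact M.le_add_right x z

theorem sup_eq_right {x y : A} (h : M.le x y) : M.sup x y = y := by
  unfold sup; rw [M.sub_eq, h, M.neg_one, M.zero_add]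

theorem le_antisymm {x y : A} (h₁ : M.le x y) (h₂ : M.le y x) : x = y := by
  rw [← M.sup_eq_right h₁, M.sup_comm, M.sup_eq_right h₂]

theorem add_sub_of_le {x y : A} (h : M.le x y) : M.add x (M.sub y x) = y := by
  rw [M.add_comm]
  exact (M.sup_comm y x).trans (M.sup_eq_right h)

theorem exists_add_eq_of_le {x y : A} (h : M.le x y) : ∃ z, M.add x z = y :=
  ⟨M.sub y x, M.add_sub_of_le h⟩

theorem le_trans {x y z : A} (h₁ : M.le x y) (h₂ : M.le y z) : M.le x z := by
  obtain ⟨u, rfl⟩ := M.exists_add_eq_of_le h₁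
  obtain ⟨v, rfl⟩ := M.exists_add_eq_of_le h₂
  rw [← M.add_assoc]
  exact M.le_add_right _ _

theorem add_le_add_left {x y : A} (z : A) (h : M.le x y) : M.le (M.add z x) (M.add z y) := by
  obtain ⟨u, rfl⟩ := M.exists_add_eq_of_le h
  rw [M.add_assoc]
  exact M.le_add_right _ _

theorem add_le_add {x y u v : A} (h₁ : M.le x y) (h₂ : M.le u v) :
    M.le (M.add x u) (M.add y v) := by
  refine M.le_trans (M.add_le_add_left x h₂) ?_
  rw [M.add_comm x, M.add_comm y]
  exact M.add_le_add_left v h₁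

theorem neg_le_neg_iff {x y : A} : M.le (M.neg y) (M.neg x) ↔ M.le x y := by
  unfold le; rw [M.neg_neg, M.add_comm]

theorem le_neg_comm {x y : A} : M.le x (M.neg y) ↔ M.le y (M.neg x) := by
  unfold le; rw [M.add_comm]

theorem mul_le_mul {x y u v : A} (h₁ : M.le x y) (h₂ : M.le u v) :
    M.le (M.mul x u) (M.mul y v) := by
  rw [← M.neg_le_neg_iff, M.neg_mul, M.neg_mul]
  exact M.add_le_add (M.neg_le_neg_iff.2 h₁) (M.neg_le_neg_iff.2 h₂)

theorem mul_le_left (x y : A) : M.le (M.mul x y) x := by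
  rw [← M.neg_le_neg_iff, M.neg_mul]; exact M.le_add_right _ _

theorem mul_le_right (x y : A) : M.le (M.mul x y) y := by
  rw [M.mul_comm]; exact M.mul_le_left y x

theorem le_sup_left (x y : A) : M.le x (M.sup x y) := by
  rw [M.sup_comm]; exact M.le_add_left x _

theorem le_sup_right (x y : A) : M.le y (M.sup x y) := M.le_add_left y _

theorem sup_le {x y z : A} (h₁ : M.le x z) (h₂ : M.le y z) : M.le (M.sup x y) z := by
  have hmono : M.le (M.sup x y) (M.sup z y) := by
    refine M.add_le_add ?_ (M.le_refl y)
    rw [M.sub_eq, M.sub_eq, M.neg_le_neg_iff]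
    exact M.add_le_add (M.neg_le_neg_iff.2 h₁) (M.le_refl y)
  rwa [M.sup_comm z, M.sup_eq_right h₂] at hmono

theorem inf_le_left (x y : A) : M.le (M.inf x y) x := by
  unfold inf; rw [← M.neg_le_neg_iff, M.neg_neg]; exact M.le_sup_left _ _

theorem inf_le_right (x y : A) : M.le (M.inf x y) y := by
  rw [M.inf_comm]; exact M.inf_le_left y x

theorem le_inf {x y z : A} (h₁ : M.le z x) (h₂ : M.le z y) : M.le z (M.inf x y) := by
  unfold inf
  rw [M.le_neg_comm]
  exact M.sup_le (M.neg_le_neg_iff.2 h₁) (M.neg_le_neg_iff.2 h₂)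

theorem inf_eq_left {x y : A} (h : M.le x y) : M.inf x y = x := by
  unfold inf; rw [M.sup_comm, M.sup_eq_right (M.neg_le_neg_iff.2 h), M.neg_neg]

theorem sub_eq_zero_iff_le {x y : A} : M.sub x y = M.zero ↔ M.le x y := by
  rw [M.sub_eq, ← M.neg_one]
  constructor
  · intro h
    have h' := congrArg M.neg h
    rwa [M.neg_neg, M.neg_neg] at h'
  · intro h
    rw [show M.add (M.neg x) y = M.one from h]

theorem eq_zero_of_le_zero {x : A} (h : M.le x M.zero) : x = M.zero :=
  M.le_antisymm h (M.zero_le x)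

theorem le_neg_add_mul (x y : A) : M.le x (M.add (M.neg y) (M.mul x y)) := by
  have h := M.le_sup_left x (M.neg y)
  unfold sup at h
  rwa [M.sub_eq, M.add_comm] at h

theorem mul_le_iff_le_neg_add {x y z : A} : M.le (M.mul x y) z ↔ M.le x (M.add (M.neg y) z) := by
  refine ⟨fun h => M.le_trans (M.le_neg_add_mul x y) (M.add_le_add_left _ h), fun h => ?_⟩
  refine M.le_trans (M.mul_le_mul h (M.le_refl y)) ?_
  unfold le
  rw [M.neg_mul, ← M.add_assoc, M.neg_add_self]

theorem mul_add_le (c a b : A) : M.le (M.mul c (M.add a b)) (M.add a (M.mul c b)) := by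
  rw [M.mul_comm, M.mul_le_iff_le_neg_add, M.add_assoc, M.add_comm (M.neg c) a, ← M.add_assoc,
    M.mul_comm c b]
  exact M.add_le_add_left a (M.le_neg_add_mul b c)

theorem add_sub_le {u v a : A} (h : M.le v a) : M.le (M.sub (M.add u v) a) u := by
  have h' := M.mul_add_le (M.neg a) u v
  rw [M.mul_comm _ v, show M.mul v (M.neg a) = M.zero from M.sub_eq_zero_iff_le.2 h,
    M.add_zero, M.mul_comm] at h'
  exact h'

theorem mul_sup (a b c : A) : M.mul a (M.sup b c) = M.sup (M.mul a b) (M.mul a c) := by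
  refine M.le_antisymm ?_ (M.sup_le (M.mul_le_mul (M.le_refl a) (M.le_sup_left b c))
    (M.mul_le_mul (M.le_refl a) (M.le_sup_right b c)))
  rw [M.mul_comm, M.mul_le_iff_le_neg_add]
  refine M.sup_le ?_ ?_
  · refine M.le_trans (M.le_neg_add_mul b a) (M.add_le_add_left _ ?_)
    rw [M.mul_comm]; exact M.le_sup_left _ _
  · refine M.le_trans (M.le_neg_add_mul c a) (M.add_le_add_left _ ?_)
    rw [M.mul_comm]; exact M.le_sup_right _ _

theorem inf_add_le (x y z : A) :
    M.le (M.inf x (M.add y z)) (M.add (M.inf x y) (M.inf x z)) := by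
  set w := M.inf x (M.add y z)
  suffices h : M.le (M.mul w (M.neg (M.inf x y))) (M.inf x z) by
    rwa [M.mul_le_iff_le_neg_add, M.neg_neg] at h
  rw [M.neg_inf, M.mul_sup]
  refine M.le_inf ?_ ?_
  · exact M.sup_le (M.le_trans (M.mul_le_left _ _) (M.inf_le_left _ _))
      (M.le_trans (M.mul_le_left _ _) (M.inf_le_left _ _))
  · refine M.sup_le ?_ ?_
    · have h : M.le (M.mul w (M.neg x)) (M.mul x (M.neg x)) :=
        M.mul_le_mul (M.inf_le_left _ _) (M.le_refl _)
      rw [M.mul_neg_self] at h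
      exact M.le_trans h (M.zero_le z)
    · have h : M.le (M.mul w (M.neg y)) (M.mul (M.add z y) (M.neg y)) := by
        refine M.mul_le_mul ?_ (M.le_refl _)
        rw [M.add_comm]; exact M.inf_le_right _ _
      rw [M.mul_add_neg] at h
      exact M.le_trans h (M.inf_le_left _ _)

end

def IsIdempotent (M : MVAlgebra A) (e : A) : Prop := M.add e e = e

namespace IsIdempotent

theorem inf_neg_self (he : M.IsIdempotent e) : M.inf e (M.neg e) = M.zero := by
  rw [M.inf_eq_mul, M.neg_neg, he, M.mul_neg_self]

theorem mul_self (he : M.IsIdempotent e) : M.mul e e = e := by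
  refine M.le_antisymm (M.mul_le_left e e) (M.sub_eq_zero_iff_le.1 ?_)
  unfold sub
  rw [M.neg_mul, M.mul_comm, ← M.inf_eq_mul, M.inf_comm, he.inf_neg_self]

theorem neg (he : M.IsIdempotent e) : M.IsIdempotent (M.neg e) := by
  unfold IsIdempotent
  rw [← M.neg_mul, he.mul_self]

theorem mul_eq_inf (he : M.IsIdempotent e) (a : A) : M.mul a e = M.inf a e := by
  refine M.le_antisymm (M.le_inf (M.mul_le_left _ _) (M.mul_le_right _ _)) ?_
  set d := M.inf a e
  have hd : M.inf d (M.neg e) = M.zero := by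
    refine M.eq_zero_of_le_zero ?_
    rw [← he.inf_neg_self]
    exact M.le_inf (M.le_trans (M.inf_le_left _ _) (M.inf_le_right a e)) (M.inf_le_right _ _)
  have h := M.inf_add_le d (M.neg e) (M.mul d e)
  rw [hd, M.zero_add, M.inf_eq_left (M.le_neg_add_mul d e)] at h
  exact M.le_trans (M.le_trans h (M.inf_le_right _ _))
    (M.mul_le_mul (M.inf_le_left a e) (M.le_refl e))

theorem mul_eq_self_of_le (he : M.IsIdempotent e) {x : A} (hx : M.le x e) : M.mul x e = x := by
  rw [he.mul_eq_inf, M.inf_eq_left hx]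

theorem mul_mul_self (he : M.IsIdempotent e) (a : A) : M.mul (M.mul a e) e = M.mul a e := by
  rw [← M.mul_assoc, he.mul_self]

theorem add_mul (he : M.IsIdempotent e) (a b : A) :
    M.mul (M.add a b) e = M.mul (M.add (M.mul a e) (M.mul b e)) e := by
  refine M.le_antisymm ?_
    (M.mul_le_mul (M.add_le_add (M.mul_le_left a e) (M.mul_le_left b e)) (M.le_refl e))
  have hstep : M.le (M.mul (M.add a b) e) (M.add (M.mul a e) b) := by
    rw [M.mul_comm, M.add_comm a b, M.add_comm _ b, M.mul_comm a e]
    exact M.mul_add_le e b a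
  have hstep' : M.le (M.mul (M.add (M.mul a e) b) e) (M.add (M.mul a e) (M.mul b e)) := by
    rw [M.mul_comm _ e, M.mul_comm b e]
    exact M.mul_add_le e (M.mul a e) b
  have h := M.mul_le_mul hstep (M.le_refl e)
  rw [he.mul_mul_self] at h
  rw [he.mul_eq_inf (M.add (M.mul a e) (M.mul b e))]
  exact M.le_inf (M.le_trans h hstep') (M.mul_le_right _ _)

theorem neg_mul_mul (he : M.IsIdempotent e) (a : A) :
    M.mul (M.neg (M.mul a e)) e = M.mul (M.neg a) e := by
  refine M.le_antisymm ?_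
    (M.mul_le_mul (M.neg_le_neg_iff.2 (M.mul_le_left a e)) (M.le_refl e))
  have h := M.mul_add_le e (M.neg a) (M.neg e)
  rw [M.mul_neg_self, M.add_zero, M.mul_comm, ← M.neg_mul] at h
  rw [he.mul_eq_inf (M.neg a)]
  exact M.le_inf h (M.mul_le_right _ _)

theorem add_mul_left (he : M.IsIdempotent e) (a b : A) :
    M.mul (M.add (M.mul a e) b) e = M.mul (M.add a b) e := by
  rw [he.add_mul (M.mul a e) b, he.mul_mul_self a, ← he.add_mul a b]

theorem add_mul_right (he : M.IsIdempotent e) (a b : A) :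
    M.mul (M.add a (M.mul b e)) e = M.mul (M.add a b) e := by
  rw [M.add_comm a, he.add_mul_left b a, M.add_comm b a]

theorem eq_zero_of_le_of_le_neg (he : M.IsIdempotent e) {x : A} (h₁ : M.le x e)
    (h₂ : M.le x (M.neg e)) : x = M.zero :=
  M.eq_zero_of_le_zero (he.inf_neg_self ▸ M.le_inf h₁ h₂)

theorem mul_eq_zero_of_le_neg (he : M.IsIdempotent e) {y : A} (hy : M.le y (M.neg e)) :
    M.mul y e = M.zero :=
  he.eq_zero_of_le_of_le_neg (M.mul_le_right y e) (M.le_trans (M.mul_le_left y e) hy)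

theorem add_mul_of_le (he : M.IsIdempotent e) {x y : A} (hx : M.le x e)
    (hy : M.le y (M.neg e)) : M.mul (M.add x y) e = x := by
  rw [he.add_mul, he.mul_eq_zero_of_le_neg hy, M.add_zero, he.mul_mul_self,
    he.mul_eq_self_of_le hx]

theorem mul_add_mul_neg (he : M.IsIdempotent e) (a : A) :
    M.add (M.mul a e) (M.mul a (M.neg e)) = a := by
  refine M.le_antisymm (M.sub_eq_zero_iff_le.1 (he.eq_zero_of_le_of_le_neg ?_ ?_)) ?_
  · exact M.le_trans (M.add_sub_le (M.mul_le_left a _)) (M.mul_le_right a e)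
  · rw [M.add_comm]
    exact M.le_trans (M.add_sub_le (M.mul_le_left a _)) (M.mul_le_right a _)
  · have h := M.inf_add_le a e (M.neg e)
    rwa [M.add_neg_self, M.inf_eq_left (M.le_one a), ← he.mul_eq_inf,
      ← he.neg.mul_eq_inf] at h

end IsIdempotent

def Iic (he : M.IsIdempotent e) : MVAlgebra {x : A // M.le x e} where
  add x y := ⟨M.mul (M.add x.1 y.1) e, M.mul_le_right _ _⟩
  neg x := ⟨M.mul (M.neg x.1) e, M.mul_le_right _ _⟩
  zero := ⟨M.zero, M.zero_le e⟩
  add_assoc x y z := Subtype.ext <| by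
    change M.mul (M.add x.1 (M.mul (M.add y.1 z.1) e)) e
      = M.mul (M.add (M.mul (M.add x.1 y.1) e) z.1) e
    rw [he.add_mul_right, he.add_mul_left, M.add_assoc]
  add_comm x y := Subtype.ext <| by
    change M.mul (M.add x.1 y.1) e = M.mul (M.add y.1 x.1) e
    rw [M.add_comm]
  add_zero x := Subtype.ext <| by
    change M.mul (M.add x.1 M.zero) e = x.1
    rw [M.add_zero, he.mul_eq_self_of_le x.2]
  neg_neg x := Subtype.ext <| by
    change M.mul (M.neg (M.mul (M.neg x.1) e)) e = x.1
    rw [he.neg_mul_mul, M.neg_neg, he.mul_eq_self_of_le x.2]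
  add_neg_zero x := Subtype.ext <| by
    change M.mul (M.add x.1 (M.mul M.one e)) e = M.mul M.one e
    rw [M.one_mul]
    refine M.le_antisymm (M.mul_le_right _ _) ?_
    have h := M.mul_le_mul (M.le_add_left e x.1) (M.le_refl e)
    rwa [he.mul_self] at h
  luk x y := Subtype.ext <| by
    change M.mul (M.add (M.mul (M.neg (M.mul (M.add (M.mul (M.neg x.1) e) y.1) e)) e) y.1) e
      = M.mul (M.add (M.mul (M.neg (M.mul (M.add (M.mul (M.neg y.1) e) x.1) e)) e) x.1) e
    rw [he.add_mul_left (M.neg x.1), he.add_mul_left (M.neg y.1), he.neg_mul_mul,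
      he.neg_mul_mul, he.add_mul_left, he.add_mul_left, M.luk]

def prod (M : MVAlgebra A) (N : MVAlgebra B) : MVAlgebra (A × B) where
  add x y := (M.add x.1 y.1, N.add x.2 y.2)
  neg x := (M.neg x.1, N.neg x.2)
  zero := (M.zero, N.zero)
  add_assoc x y z := Prod.ext (M.add_assoc x.1 y.1 z.1) (N.add_assoc x.2 y.2 z.2)
  add_comm x y := Prod.ext (M.add_comm x.1 y.1) (N.add_comm x.2 y.2)
  add_zero x := Prod.ext (M.add_zero x.1) (N.add_zero x.2)
  neg_neg x := Prod.ext (M.neg_neg x.1) (N.neg_neg x.2)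
  add_neg_zero x := Prod.ext (M.add_neg_zero x.1) (N.add_neg_zero x.2)
  luk x y := Prod.ext (M.luk x.1 y.1) (N.luk x.2 y.2)

structure IsHom (M : MVAlgebra A) (N : MVAlgebra B) (φ : A → B) : Prop where
  map_add : ∀ a b, φ (M.add a b) = N.add (φ a) (φ b)
  map_neg : ∀ a, φ (M.neg a) = N.neg (φ a)
  map_zero : φ M.zero = N.zero

theorem IsHom.symm {N : MVAlgebra B} {φ : A ≃ B} (hφ : IsHom M N φ) : IsHom N M φ.symm where
  map_add x y := φ.injective <| by simp only [hφ.map_add, Equiv.apply_symm_apply]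
  map_neg x := φ.injective <| by simp only [hφ.map_neg, Equiv.apply_symm_apply]
  map_zero := φ.injective <| by simp only [hφ.map_zero, Equiv.apply_symm_apply]

def splitEquiv (he : M.IsIdempotent e) : A ≃ {x : A // M.le x e} × {x : A // M.le x (M.neg e)} where
  toFun a := (⟨M.mul a e, M.mul_le_right _ _⟩, ⟨M.mul a (M.neg e), M.mul_le_right _ _⟩)
  invFun p := M.add p.1.1 p.2.1
  left_inv a := he.mul_add_mul_neg a
  right_inv p := by
    refine Prod.ext (Subtype.ext (he.add_mul_of_le p.1.2 p.2.2)) (Subtype.ext ?_)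
    change M.mul (M.add p.1.1 p.2.1) (M.neg e) = p.2.1
    rw [M.add_comm]
    exact he.neg.add_mul_of_le p.2.2 (by rw [M.neg_neg]; exact p.1.2)

theorem isHom_splitEquiv (he : M.IsIdempotent e) :
    IsHom M ((M.Iic he).prod (M.Iic he.neg)) (splitEquiv he) where
  map_add a b := Prod.ext (Subtype.ext (he.add_mul a b)) (Subtype.ext (he.neg.add_mul a b))
  map_neg a := Prod.ext (Subtype.ext (he.neg_mul_mul a).symm)
    (Subtype.ext (he.neg.neg_mul_mul a).symm)
  map_zero := Prod.ext (Subtype.ext (M.zero_mul e)) (Subtype.ext (M.zero_mul _))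

/-- The chain `Ł_n`, with `k/n` encoded as `k : Fin (n + 1)`. -/
def lukasiewicz (n : ℕ) : MVAlgebra (Fin (n + 1)) where
  add k l := ⟨min (k + l) n, by omega⟩
  neg k := k.rev
  zero := 0
  add_assoc k l m := by ext; simp only; omega
  add_comm k l := by ext; simp only; omega
  add_zero k := by ext; simp only [Fin.val_zero]; omega
  neg_neg k := Fin.rev_rev k
  add_neg_zero k := by ext; simp only [Fin.val_rev, Fin.val_zero]; omega
  luk k l := by ext; simp only [Fin.val_rev]; omega

structure ChainProdRepr (M : MVAlgebra A) {t : ℕ} (ns : Fin t → ℕ) where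
  toFun : A → Fin t → ℝ
  one_le : ∀ i, 1 ≤ ns i
  injective : Function.Injective toFun
  map_add : ∀ a b, toFun (M.add a b) = fun i => min (toFun a i + toFun b i) 1
  map_neg : ∀ a, toFun (M.neg a) = fun i => 1 - toFun a i
  map_zero : toFun M.zero = 0
  mem_range_iff : ∀ g : Fin t → ℝ,
    (∀ i, ∃ k : ℕ, k ≤ ns i ∧ g i = (k : ℝ) / ns i) ↔ ∃ a, toFun a = g

variable {t : ℕ} {ns : Fin t → ℕ}

instance : CoeFun (M.ChainProdRepr ns) (fun _ => A → Fin t → ℝ) := ⟨ChainProdRepr.toFun⟩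

theorem isChainProdRepr_iff : M.IsChainProdRepr t ns ↔ Nonempty (M.ChainProdRepr ns) :=
  ⟨fun ⟨hns, f, hinj, hadd, hneg, hzero, hrange⟩ => ⟨⟨f, hns, hinj, hadd, hneg, hzero, hrange⟩⟩,
    fun ⟨r⟩ => ⟨r.one_le, r, r.injective, r.map_add, r.map_neg, r.map_zero, r.mem_range_iff⟩⟩

namespace ChainProdRepr

def comp {N : MVAlgebra B} (r : N.ChainProdRepr ns) (φ : A ≃ B) (hφ : IsHom M N φ) :
    M.ChainProdRepr ns where
  toFun := r ∘ φ
  one_le := r.one_le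
  injective := r.injective.comp φ.injective
  map_add a b := by simp only [Function.comp_apply, hφ.map_add, r.map_add]
  map_neg a := by simp only [Function.comp_apply, hφ.map_neg, r.map_neg]
  map_zero := by simp only [Function.comp_apply, hφ.map_zero, r.map_zero]
  mem_range_iff g := (r.mem_range_iff g).trans φ.symm.exists_congr_left

def prod {N : MVAlgebra B} {s : ℕ} {ms : Fin s → ℕ} (r : M.ChainProdRepr ns)
    (q : N.ChainProdRepr ms) : (M.prod N).ChainProdRepr (Fin.append ns ms) where
  toFun x := Fin.append (r x.1) (q x.2)
  one_le := by
    simp only [Fin.forall_fin_add, Fin.append_left, Fin.append_right]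
    exact ⟨r.one_le, q.one_le⟩
  injective x y h := by
    obtain ⟨h₁, h₂⟩ := Fin.append_eq_iff.1 h
    simp only [Fin.append_left, Fin.append_right] at h₁ h₂
    exact Prod.ext (r.injective h₁) (q.injective h₂)
  map_add a b := by
    funext i
    refine Fin.addCases (fun i => ?_) (fun j => ?_) i <;>
      simp only [Fin.append_left, Fin.append_right, MVAlgebra.prod, r.map_add, q.map_add]
  map_neg a := by
    funext i
    refine Fin.addCases (fun i => ?_) (fun j => ?_) i <;>
      simp only [Fin.append_left, Fin.append_right, MVAlgebra.prod, r.map_neg, q.map_neg]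
  map_zero := by
    funext i
    refine Fin.addCases (fun i => ?_) (fun j => ?_) i <;>
      simp only [Fin.append_left, Fin.append_right, MVAlgebra.prod, r.map_zero, q.map_zero,
        Pi.zero_apply]
  mem_range_iff g := by
    simp only [Fin.forall_fin_add, Fin.append_left, Fin.append_right, r.mem_range_iff,
      q.mem_range_iff, Fin.append_eq_iff, Prod.exists, exists_and_left, exists_and_right]

end ChainProdRepr

noncomputable def lukasiewiczRepr {n : ℕ} (hn : 1 ≤ n) :
    (lukasiewicz n).ChainProdRepr (fun _ : Fin 1 => n) where
  toFun k _ := (k : ℝ) / n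
  one_le _ := hn
  injective k l h := by
    have hkl := congrFun h 0
    have hn' : (n : ℝ) ≠ 0 := by positivity
    rw [div_left_inj' hn', Nat.cast_inj] at hkl
    exact Fin.ext hkl
  map_add k l := by
    funext
    change ((min (k + l : ℕ) n : ℕ) : ℝ) / n = min ((k : ℝ) / n + (l : ℝ) / n) 1
    rw [← add_div, ← div_self (by positivity : (n : ℝ) ≠ 0), min_div_div_right (by positivity)]
    push_cast
    rfl
  map_neg k := by
    funext
    change ((k.rev : ℕ) : ℝ) / n = 1 - (k : ℝ) / n
    rw [Fin.val_rev, show n + 1 - (k + 1) = n - k by omega, Nat.cast_sub (by omega),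
      sub_div, div_self (by positivity)]
  map_zero := by
    funext
    simp [lukasiewicz]
  mem_range_iff g := by
    refine ⟨fun h => ?_, ?_⟩
    · obtain ⟨k, hk, hg⟩ := h 0
      exact ⟨⟨k, by omega⟩, funext fun i => by rw [Subsingleton.elim i 0, hg]⟩
    · rintro ⟨k, rfl⟩ _
      exact ⟨k, k.is_le, rfl⟩

theorem subsingleton_of_one_eq_zero (h : M.one = M.zero) : Subsingleton A :=
  ⟨fun x y => by rw [← M.add_zero x, ← M.add_zero y, ← h, M.add_one, M.add_one]⟩

def chainProdReprOfSubsingleton [Subsingleton A] (M : MVAlgebra A) :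
    M.ChainProdRepr (Fin.elim0 : Fin 0 → ℕ) where
  toFun _ := 0
  one_le i := i.elim0
  injective x y _ := Subsingleton.elim x y
  map_add _ _ := Subsingleton.elim _ _
  map_neg _ := Subsingleton.elim _ _
  map_zero := rfl
  mem_range_iff _ := ⟨fun _ => ⟨M.zero, Subsingleton.elim _ _⟩, fun _ i => i.elim0⟩

section

variable (M)

def nsmul : ℕ → A → A
  | 0, _ => M.zero
  | k + 1, x => M.add (nsmul k x) x

theorem nsmul_add (k l : ℕ) (x : A) :
    M.nsmul (k + l) x = M.add (M.nsmul k x) (M.nsmul l x) := by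
  induction l with
  | zero => exact (M.add_zero _).symm
  | succ l ih => rw [← Nat.add_assoc, nsmul, nsmul, ih, M.add_assoc]

theorem nsmul_le_nsmul {k l : ℕ} (h : k ≤ l) (x : A) : M.le (M.nsmul k x) (M.nsmul l x) := by
  obtain ⟨m, rfl⟩ := Nat.exists_eq_add_of_le h
  rw [M.nsmul_add]
  exact M.le_add_right _ _

theorem nsmul_eq_of_le {k l m : ℕ} {x : A} (hkl : k < l) (h : M.nsmul k x = M.nsmul l x)
    (hm : k ≤ m) : M.nsmul m x = M.nsmul k x := by
  have hsucc : M.nsmul (k + 1) x = M.nsmul k x :=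
    M.le_antisymm (h ▸ M.nsmul_le_nsmul hkl x) (M.nsmul_le_nsmul k.le_succ x)
  induction m, hm using Nat.le_induction with
  | base => rfl
  | succ m _ ih => rw [nsmul, ih, ← nsmul, hsucc]

theorem nsmul_eq_one_of_le {n m : ℕ} {x : A} (hn : M.nsmul n x = M.one) (hm : n ≤ m) :
    M.nsmul m x = M.one := by
  obtain ⟨j, rfl⟩ := Nat.exists_eq_add_of_le hm
  rw [M.nsmul_add, hn, M.one_add]

theorem exists_isIdempotent_nsmul [Finite A] (x : A) :
    ∃ k, 1 ≤ k ∧ M.IsIdempotent (M.nsmul k x) := by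
  obtain ⟨k, l, hkl, h⟩ := Set.finite_univ.exists_lt_map_eq_of_forall_mem
    (f := fun k => M.nsmul k x) (fun _ => Set.mem_univ _)
  refine ⟨k + 1, Nat.le_add_left 1 k, ?_⟩
  rw [IsIdempotent, ← M.nsmul_add, M.nsmul_eq_of_le hkl h (m := k + 1 + (k + 1)) (by omega),
    M.nsmul_eq_of_le hkl h (m := k + 1) (by omega)]

theorem exists_nsmul_eq_one [Finite A]
    (hbool : ∀ d, M.IsIdempotent d → d = M.zero ∨ d = M.one) {x : A} (hx : x ≠ M.zero) :
    ∃ k, M.nsmul k x = M.one := by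
  obtain ⟨k, hk, hidem⟩ := M.exists_isIdempotent_nsmul x
  refine ⟨k, (hbool _ hidem).resolve_left fun h => hx (M.eq_zero_of_le_zero ?_)⟩
  have h1 : M.le (M.add M.zero x) (M.nsmul k x) := M.nsmul_le_nsmul hk x
  rwa [M.zero_add, h] at h1

theorem inf_nsmul_eq_zero {c x : A} (h : M.inf c x = M.zero) (k : ℕ) :
    M.inf (M.nsmul k c) x = M.zero := by
  induction k with
  | zero => exact M.eq_zero_of_le_zero (M.inf_le_left _ _)
  | succ k ih =>
    refine M.eq_zero_of_le_zero ?_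
    have hle := M.inf_add_le x (M.nsmul k c) c
    rw [M.inf_comm x (M.nsmul k c), ih, M.inf_comm x c, h, M.add_zero] at hle
    rwa [M.inf_comm] at hle

theorem exists_minimal_ne_zero [Finite A] (h01 : M.one ≠ M.zero) :
    ∃ c ≠ M.zero, ∀ b ≠ M.zero, M.le b c → M.le c b := by
  let _ : LE A := ⟨M.le⟩
  have : IsTrans A (fun a b => b ≤ a) := ⟨fun _ _ _ h₁ h₂ => M.le_trans h₂ h₁⟩
  obtain ⟨c, hc, hmin⟩ := (Set.toFinite {y : A | y ≠ M.zero}).exists_minimal ⟨M.one, h01⟩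
  exact ⟨c, hc, fun b hb hbc => hmin hb hbc⟩

/-- Without nontrivial idempotents, a minimal nonzero element `c` lies below every nonzero `x`:
otherwise `c ∧ x = 0`, hence `(k • c) ∧ x = 0` for all `k`, and some `k • c` is `1`. -/
theorem exists_ne_zero_forall_le [Finite A]
    (hbool : ∀ d, M.IsIdempotent d → d = M.zero ∨ d = M.one) (h01 : M.one ≠ M.zero) :
    ∃ c ≠ M.zero, ∀ x ≠ M.zero, M.le c x := by
  obtain ⟨c, hc0, hmin⟩ := M.exists_minimal_ne_zero h01
  refine ⟨c, hc0, fun x hx => ?_⟩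
  by_cases hcx : M.inf c x = M.zero
  · obtain ⟨k, hk⟩ := M.exists_nsmul_eq_one hbool hc0
    have h := M.inf_nsmul_eq_zero hcx k
    rw [hk, M.inf_comm, M.inf_eq_left (M.le_one x)] at h
    exact absurd h hx
  · exact M.le_trans (hmin _ hcx (M.inf_le_left c x)) (M.inf_le_right c x)

section LeastNonzero

variable {M} {c : A} {n : ℕ}

theorem exists_nsmul_eq (hc : ∀ x ≠ M.zero, M.le c x) (hn : M.nsmul n c = M.one) (a : A) :
    ∃ k ≤ n, M.nsmul k c = a := by
  classical
  let P : ℕ → Prop := fun k => M.le (M.nsmul k c) a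
  set k := Nat.findGreatest P n
  have hkn : k ≤ n := Nat.findGreatest_le n
  have hk : M.le (M.nsmul k c) a := Nat.findGreatest_spec (P := P) (Nat.zero_le n) (M.zero_le a)
  refine ⟨k, hkn, M.le_antisymm hk (M.sub_eq_zero_iff_le.1 ?_)⟩
  by_contra hne
  have hsucc : M.le (M.nsmul (k + 1) c) a :=
    M.add_sub_of_le hk ▸ M.add_le_add_left (M.nsmul k c) (hc _ hne)
  rcases hkn.lt_or_eq with hlt | heq
  · exact Nat.findGreatest_is_greatest (P := P) (Nat.lt_succ_self k) hlt hsucc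
  · exact hne (M.sub_eq_zero_iff_le.2 (by rw [heq, hn]; exact M.le_one a))

theorem eq_of_nsmul_eq (hn : M.nsmul n c = M.one) (hmin : ∀ m < n, M.nsmul m c ≠ M.one)
    {k l : ℕ} (hk : k ≤ n) (hl : l ≤ n) (h : M.nsmul k c = M.nsmul l c) : k = l := by
  by_contra hkl
  wlog hlt : k < l generalizing k l
  · exact this hl hk h.symm (Ne.symm hkl) (by omega)
  exact hmin k (by omega) ((M.nsmul_eq_of_le hlt h hk).symm.trans hn)

theorem neg_eq_nsmul_pred (hc0 : c ≠ M.zero) (hc : ∀ x ≠ M.zero, M.le c x)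
    (hn : M.nsmul n c = M.one) (hmin : ∀ m < n, M.nsmul m c ≠ M.one) :
    M.neg c = M.nsmul (n - 1) c := by
  obtain ⟨m, hm, hmc⟩ := exists_nsmul_eq hc hn (M.neg c)
  have hm1 : M.nsmul (m + 1) c = M.one := by rw [nsmul, hmc, M.neg_add_self]
  have hmn : m ≠ n := fun h => hc0 (by rw [← M.neg_neg c, ← hmc, h, hn, M.neg_one])
  have : ¬ m + 1 < n := fun h => hmin _ h hm1
  rw [← hmc, show m = n - 1 by omega]

theorem neg_nsmul (hn : M.nsmul n c = M.one) (hneg : M.neg c = M.nsmul (n - 1) c) {k : ℕ}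
    (hk : k ≤ n) : M.neg (M.nsmul k c) = M.nsmul (n - k) c := by
  induction k with
  | zero => exact hn.symm
  | succ k ih =>
    rw [nsmul, M.neg_add, ih (by omega), show n - k = n - (k + 1) + 1 by omega, nsmul,
      M.mul_add_neg, hneg, M.inf_eq_left (M.nsmul_le_nsmul (by omega) c)]

theorem isHom_nsmul (hn : M.nsmul n c = M.one) (hneg : M.neg c = M.nsmul (n - 1) c) :
    IsHom (lukasiewicz n) M (fun k => M.nsmul k c) where
  map_add k l := by
    change M.nsmul (min (k + l) n) c = M.add (M.nsmul k c) (M.nsmul l c)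
    rw [← M.nsmul_add]
    rcases le_total (k + l : ℕ) n with h | h
    · rw [min_eq_left h]
    · rw [min_eq_right h, hn, M.nsmul_eq_one_of_le hn h]
  map_neg k := by
    change M.nsmul (k.rev : ℕ) c = M.neg (M.nsmul k c)
    rw [neg_nsmul hn hneg k.is_le, Fin.val_rev]
    congr 1
    omega
  map_zero := rfl

end LeastNonzero

theorem exists_chainProdRepr_of_forall_isIdempotent [Finite A]
    (hbool : ∀ d, M.IsIdempotent d → d = M.zero ∨ d = M.one) (h01 : M.one ≠ M.zero) :
    ∃ n, Nonempty (M.ChainProdRepr fun _ : Fin 1 => n) := by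
  classical
  obtain ⟨c, hc0, hc⟩ := M.exists_ne_zero_forall_le hbool h01
  have hex : ∃ n, M.nsmul n c = M.one := M.exists_nsmul_eq_one hbool hc0
  set n := Nat.find hex
  have hn : M.nsmul n c = M.one := Nat.find_spec hex
  have hmin : ∀ m < n, M.nsmul m c ≠ M.one := fun m => Nat.find_min hex
  have hn1 : 1 ≤ n := Nat.one_le_iff_ne_zero.2 fun h => h01 (by rw [← hn, h]; rfl)
  have hneg := neg_eq_nsmul_pred hc0 hc hn hmin
  let φ : Fin (n + 1) ≃ A := Equiv.ofBijective (fun k => M.nsmul k c)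
    ⟨fun k l h => Fin.ext (eq_of_nsmul_eq hn hmin k.is_le l.is_le h), fun a =>
      let ⟨k, hk, hka⟩ := exists_nsmul_eq hc hn a; ⟨⟨k, by omega⟩, hka⟩⟩
  exact ⟨n, ⟨(lukasiewiczRepr hn1).comp φ.symm (isHom_nsmul hn hneg).symm⟩⟩

end

theorem card_Iic_lt [Finite A] (he : M.IsIdempotent e) (hne : M.neg e ≠ M.zero) :
    Nat.card {x : A // M.le x e} < Nat.card A := by
  rw [Nat.card_congr (splitEquiv he), Nat.card_prod]
  have : Nonempty {x : A // M.le x e} := ⟨⟨M.zero, M.zero_le e⟩⟩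
  have hpos : 0 < Nat.card {x : A // M.le x e} := Nat.card_pos
  have hgt : 1 < Nat.card {x : A // M.le x (M.neg e)} :=
    Finite.one_lt_card_iff_nontrivial.2 ⟨⟨M.zero, M.zero_le _⟩, ⟨M.neg e, M.le_refl _⟩,
      fun h => hne (congrArg Subtype.val h).symm⟩
  exact lt_mul_of_one_lt_right hpos hgt

theorem exists_chainProdRepr [Finite A] (M : MVAlgebra A) :
    ∃ t, ∃ ns : Fin t → ℕ, Nonempty (M.ChainProdRepr ns) := by
  induction hN : Nat.card A using Nat.strong_induction_on generalizing A with
  | _ N ih =>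
  by_cases h01 : M.one = M.zero
  · have := M.subsingleton_of_one_eq_zero h01
    exact ⟨0, _, ⟨M.chainProdReprOfSubsingleton⟩⟩
  by_cases hbool : ∀ d, M.IsIdempotent d → d = M.zero ∨ d = M.one
  · obtain ⟨n, hr⟩ := M.exists_chainProdRepr_of_forall_isIdempotent hbool h01
    exact ⟨1, _, hr⟩
  push Not at hbool
  obtain ⟨e, he, he0, he1⟩ := hbool
  have hne0 : M.neg e ≠ M.zero := fun h => he1 (by rw [← M.neg_neg e, h]; rfl)
  obtain ⟨t₁, ns₁, ⟨r₁⟩⟩ := ih _ (hN ▸ card_Iic_lt he hne0) (M.Iic he) rfl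
  obtain ⟨t₂, ns₂, ⟨r₂⟩⟩ :=
    ih _ (hN ▸ card_Iic_lt he.neg (by rwa [M.neg_neg])) (M.Iic he.neg) rfl
  exact ⟨_, _, ⟨(r₁.prod r₂).comp (splitEquiv he) (isHom_splitEquiv he)⟩⟩

def IsIdempotentAtom (M : MVAlgebra A) (e : A) : Prop :=
  M.IsIdempotent e ∧ e ≠ M.zero ∧ ∀ d, M.IsIdempotent d → M.le d e → d = M.zero ∨ d = e

namespace ChainProdRepr

variable (r : M.ChainProdRepr ns)

theorem cast_pos (r : M.ChainProdRepr ns) (i : Fin t) : (0 : ℝ) < ns i := by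
  exact_mod_cast r.one_le i

theorem map_one : r M.one = 1 := by
  change r (M.neg M.zero) = 1
  rw [r.map_neg, r.map_zero]
  funext
  simp

theorem exists_apply_eq (a : A) (i : Fin t) : ∃ k : ℕ, k ≤ ns i ∧ r a i = k / ns i :=
  (r.mem_range_iff _).2 ⟨a, rfl⟩ i

theorem apply_nonneg (a : A) : 0 ≤ r a := fun i => by
  obtain ⟨k, -, h⟩ := r.exists_apply_eq a i
  rw [h]
  positivity

theorem le_iff {a b : A} : M.le a b ↔ r a ≤ r b := by
  unfold le
  rw [← r.injective.eq_iff, r.map_add, r.map_neg, r.map_one, funext_iff, Pi.le_def]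
  refine forall_congr' fun i => ?_
  simp only [Pi.one_apply, min_eq_right_iff]
  constructor <;> intro h <;> linarith

theorem isIdempotent_iff {a : A} : M.IsIdempotent a ↔ ∀ i, r a i = 0 ∨ r a i = 1 := by
  unfold IsIdempotent
  rw [← r.injective.eq_iff, r.map_add, funext_iff]
  refine forall_congr' fun i => ⟨fun h => ?_, ?_⟩
  · rcases le_total (r a i + r a i) 1 with h' | h'
    · rw [min_eq_left h'] at h
      left
      linarith
    · rw [min_eq_right h'] at h
      exact Or.inr h.symm
  · rintro (h | h) <;> rw [h] <;> norm_num

theorem exists_apply_eq_single (i : Fin t) {k : ℕ} (hk : k ≤ ns i) :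
    ∃ a, r a = Pi.single i ((k : ℝ) / ns i) := by
  refine (r.mem_range_iff _).1 fun j => ?_
  by_cases hj : j = i
  · subst hj
    exact ⟨k, hk, by rw [Pi.single_eq_same]⟩
  · exact ⟨0, Nat.zero_le _, by rw [Pi.single_eq_of_ne hj, Nat.cast_zero, zero_div]⟩

noncomputable def unit (i : Fin t) : A := (r.exists_apply_eq_single i le_rfl).choose

theorem apply_unit (i : Fin t) : r (r.unit i) = Pi.single i 1 := by
  rw [unit, (r.exists_apply_eq_single i le_rfl).choose_spec, div_self (r.cast_pos i).ne']

theorem isIdempotentAtom_unit (i : Fin t) : M.IsIdempotentAtom (r.unit i) := by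
  refine ⟨r.isIdempotent_iff.2 fun j => ?_, fun h => ?_, fun d hd hle => ?_⟩
  · rw [r.apply_unit]
    by_cases hj : j = i
    · subst hj
      exact Or.inr (Pi.single_eq_same _ _)
    · exact Or.inl (Pi.single_eq_of_ne hj _)
  · have hi := congrFun (congrArg r h) i
    rw [r.apply_unit, r.map_zero, Pi.single_eq_same] at hi
    exact one_ne_zero hi
  · rw [r.le_iff, r.apply_unit] at hle
    have hd' := Pi.eq_single_of_nonneg_of_le_single (r.apply_nonneg d) hle
    rcases r.isIdempotent_iff.1 hd i with h | h
    · exact Or.inl (r.injective (by rw [hd', h, r.map_zero, Pi.single_zero]))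
    · exact Or.inr (r.injective (by rw [hd', h, r.apply_unit]))

theorem exists_eq_unit {e : A} (he : M.IsIdempotentAtom e) : ∃ i, e = r.unit i := by
  obtain ⟨hidem, hne, hmin⟩ := he
  obtain ⟨i, hi⟩ : ∃ i, r e i = 1 := by
    by_contra! h
    refine hne (r.injective ?_)
    rw [r.map_zero]
    funext i
    exact (r.isIdempotent_iff.1 hidem i).resolve_right (h i)
  have hle : M.le (r.unit i) e := by
    rw [r.le_iff, r.apply_unit]
    intro j
    by_cases hj : j = i
    · subst hj
      rw [Pi.single_eq_same, hi]
    · rw [Pi.single_eq_of_ne hj]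
      exact r.apply_nonneg e j
  have hunit := r.isIdempotentAtom_unit i
  exact ⟨i, ((hmin _ hunit.1 hle).resolve_left hunit.2.1).symm⟩

theorem card_Iic_unit (i : Fin t) : Nat.card {x : A // M.le x (r.unit i)} = ns i + 1 := by
  have hpos := r.cast_pos i
  let g (k : Fin (ns i + 1)) : A := (r.exists_apply_eq_single i k.is_le).choose
  have hg (k : Fin (ns i + 1)) : r (g k) = Pi.single i ((k : ℝ) / ns i) :=
    (r.exists_apply_eq_single i k.is_le).choose_spec
  have hg_le (k : Fin (ns i + 1)) : M.le (g k) (r.unit i) := by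
    rw [r.le_iff, hg, r.apply_unit, Pi.single_le_single, div_le_one hpos]
    exact_mod_cast k.is_le
  refine (Nat.card_congr (Equiv.ofBijective (fun k => ⟨g k, hg_le k⟩) ⟨?_, ?_⟩)).symm.trans
    (Nat.card_fin _)
  · intro k l hkl
    have h := Pi.single_injective i
      ((hg k).symm.trans ((congrArg (r ∘ Subtype.val) hkl).trans (hg l)))
    rw [div_left_inj' hpos.ne', Nat.cast_inj] at h
    exact Fin.ext h
  · rintro ⟨x, hx⟩
    rw [r.le_iff, r.apply_unit] at hx
    obtain ⟨k, hk, hxk⟩ := r.exists_apply_eq x i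
    refine ⟨⟨k, by omega⟩, Subtype.ext (r.injective ?_)⟩
    rw [hg, Pi.eq_single_of_nonneg_of_le_single (r.apply_nonneg x) hx, hxk]

theorem unit_injective : Function.Injective r.unit := fun i j h => by
  have hij := congrFun (congrArg r h) i
  rw [r.apply_unit, r.apply_unit, Pi.single_eq_same] at hij
  by_contra hne
  rw [Pi.single_eq_of_ne hne] at hij
  exact one_ne_zero hij

noncomputable def unitEquiv : Fin t ≃ {e : A // M.IsIdempotentAtom e} :=
  Equiv.ofBijective (fun i => ⟨r.unit i, r.isIdempotentAtom_unit i⟩)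
    ⟨fun _ _ h => r.unit_injective (congrArg Subtype.val h),
      fun ⟨_, he⟩ => (r.exists_eq_unit he).imp fun _ h => Subtype.ext h.symm⟩

theorem exists_equiv_comp_eq (r : M.ChainProdRepr ns) {s : ℕ} {ms : Fin s → ℕ}
    (q : M.ChainProdRepr ms) :
    ∃ e : Fin t ≃ Fin s, ∀ i, ms (e i) = ns i := by
  refine ⟨r.unitEquiv.trans q.unitEquiv.symm, fun i => ?_⟩
  have h : q.unit (q.unitEquiv.symm (r.unitEquiv i)) = r.unit i :=
    congrArg Subtype.val (q.unitEquiv.apply_symm_apply (r.unitEquiv i))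
  have hcard := q.card_Iic_unit (q.unitEquiv.symm (r.unitEquiv i))
  rw [h, r.card_Iic_unit] at hcard
  exact (Nat.succ_injective hcard).symm

end ChainProdRepr

end MVAlgebra

/-- Every finite MV-algebra is isomorphic to a finite product `Ł_{n₁} × ⋯ × Ł_{n_t}` of
finite Łukasiewicz chains, and this representation is unique up to reordering of the
factors. -/
theorem mv_finite_chainProdRepr {A : Type*} [Finite A] (M : MVAlgebra A) :
    (∃ (t : ℕ) (ns : Fin t → ℕ), M.IsChainProdRepr t ns) ∧
    (∀ (t s : ℕ) (ns : Fin t → ℕ) (ms : Fin s → ℕ),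
      M.IsChainProdRepr t ns → M.IsChainProdRepr s ms →
      ∃ e : Fin t ≃ Fin s, ∀ i, ms (e i) = ns i) := by
  refine ⟨?_, fun t s ns ms h₁ h₂ => ?_⟩
  · obtain ⟨t, ns, hr⟩ := M.exists_chainProdRepr
    exact ⟨t, ns, MVAlgebra.isChainProdRepr_iff.2 hr⟩
  · obtain ⟨r⟩ := MVAlgebra.isChainProdRepr_iff.1 h₁
    obtain ⟨q⟩ := MVAlgebra.isChainProdRepr_iff.1 h₂
    exact r.exists_equiv_comp_eq q
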